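/- Let E ∈ ℂ^{n×n} be Hermitian, F ∈ ℂ^{m×n}, G ∈ ℂ^{m×m}, q ∈ ℂⁿ, r ∈ ℂᵐ, û ∈ ℂⁿ, p̂ ∈ ℂᵐ, and fix positive weights α₁, α₂, α₃, β₁, β₂. With Q = q − Eû − F*p̂, R = r − Fû − Gp̂, and the matrices X₁, X₂, I₁, I₂ (built from N₁ = J_S^n Φ_E D_{S,n}⁻¹, N₂ = J_SK^n Ψ_E D_{SK,n}⁻¹, Σ_F, Σ_G as follows: X₁ = [X̂₁, 0_{2n×2m²}] with X̂₁ = [[α₁⁻¹(ℜ(û)ᵀ⊗Iₙ)N₁, −α₁⁻¹(ℑ(û)ᵀ⊗Iₙ)N₂, α₂⁻¹(Iₙ⊗ℜ(p̂)ᵀ)Σ_F, α₂⁻¹(Iₙ⊗ℑ(p̂)ᵀ)Σ_F],[α₁⁻¹(ℑ(û)ᵀ⊗Iₙ)N₁, α₁⁻¹(ℜ(û)ᵀ⊗Iₙ)N₂, α₂⁻¹(Iₙ⊗ℑ(p̂)ᵀ)Σ_F, −α₂⁻¹(Iₙ⊗ℜ(p̂)ᵀ)Σ_F]], X₂ = [0_{2m×n²},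 X̂₂] with X̂₂ = [[α₂⁻¹(ℜ(û)ᵀ⊗I_m)Σ_F, −α₂⁻¹(ℑ(û)ᵀ⊗I_m)Σ_F, α₃⁻¹(ℜ(p̂)ᵀ⊗I_m)Σ_G, −α₃⁻¹(ℑ(p̂)ᵀ⊗I_m)Σ_G],[α₂⁻¹(ℑ(û)ᵀ⊗I_m)Σ_F, α₂⁻¹(ℜ(û)ᵀ⊗I_m)Σ_F, α₃⁻¹(ℑ(p̂)ᵀ⊗I_m)Σ_G, α₃⁻¹(ℜ(p̂)ᵀ⊗I_m)Σ_G]], I₁ = [−β₁⁻¹I_{2n}, 0_{2n×2m}], I₂ = [0_{2m×2n}, −β₂⁻¹I_{2m}]): for any ΔE ∈ ℂ^{n×n} Hermitian, ΔF ∈ ℂ^{m×n}, ΔG ∈ ℂ^{m×m}, Δq ∈ ℂⁿ, Δr ∈ ℂᵐ, define ΔY = [α₁ D_{S,n} vec_S(ℜ(ΔE⊙Θ_E)); α₁ D_{SK,n} vec_SK(ℑ(ΔE⊙Θ_E)); α₂ vec(ℜ(ΔF⊙Θ_F)); α₂ vec(ℑ(ΔF⊙Θ_F)); α₃ vec(ℜ(ΔG⊙Θ_G));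 α₃ vec(ℑ(ΔG⊙Θ_G))] and ΔZ = [β₁ℜ(Δq); β₁ℑ(Δq); β₂ℜ(Δr); β₂ℑ(Δr)]. Then (a) ζ^{σ₁}(ΔE⊙Θ_E, ΔF⊙Θ_F, ΔG⊙Θ_G, Δq, Δr) = ‖[ΔY; ΔZ]‖₂, and (b) the equations (E+ΔE⊙Θ_E)û + (F+ΔF⊙Θ_F)*p̂ = q+Δq and (F+ΔF⊙Θ_F)û + (G+ΔG⊙Θ_G)p̂ = r+Δr hold if and only if [[X₁, I₁],[X₂, I₂]]·[ΔY; ΔZ] = [ℜ(Q); ℑ(Q); ℜ(R); ℑ(R)]. -/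

import Mathlib

/-!
Both claims are entrywise bookkeeping. For (a), the squared Frobenius norm of a complex matrix
is the sum of those of its real and imaginary parts; for Hermitian `ΔE ⊙ Θ_E` the real part is
symmetric and the imaginary part skew, so each strictly lower entry stands for two entries of the
matrix, which is what the weights `√2` in `D_S`, `D_SK` account for. For (b), the two complex
equations are equivalent to their real and imaginary parts, and each block row of
`[[X₁, I₁], [X₂, I₂]]` computes exactly these: `(uᵀ ⊗ I) vec A = A u`, `(I ⊗ vᵀ) vec A = Aᵀ v`,
`J_S vec_S S = vec S` for symmetric `S` (and `J_SK` likewise for skew matrices), the masks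
`Φ`, `Ψ`, `Σ` fix the vectorization of any matrix vanishing off the sign pattern, and the weights
`α⁻¹`, `β⁻¹` cancel the scalings in `ΔY`, `ΔZ`.
-/

open Matrix

noncomputable section

namespace GSPPBE

/-- Entrywise real part of a complex matrix. -/
def reM {I J : Type*} (A : Matrix I J ℂ) : Matrix I J ℝ := A.map Complex.re

/-- Entrywise imaginary part of a complex matrix. -/
def imM {I J : Type*} (A : Matrix I J ℂ) : Matrix I J ℝ := A.map Complex.im

/-- Entrywise real part of a complex vector. -/
def reV {I : Type*} (v : I → ℂ) : I → ℝ := fun i => (v i).re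

/-- Entrywise imaginary part of a complex vector. -/
def imV {I : Type*} (v : I → ℂ) : I → ℝ := fun i => (v i).im

/-- Frobenius norm of a matrix. -/
def frob {I J α : Type*} [Fintype I] [Fintype J] [SeminormedAddGroup α]
    (A : Matrix I J α) : ℝ :=
  Real.sqrt (∑ i, ∑ j, ‖A i j‖ ^ 2)

/-- Euclidean norm of a (finitely indexed) vector. -/
def eunorm {I α : Type*} [Fintype I] [SeminormedAddGroup α] (v : I → α) : ℝ :=
  Real.sqrt (∑ i, ‖v i‖ ^ 2)

/-- Column-major vectorization: `vecM A (j, i) = A i j`. -/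
def vecM {I J α : Type*} (A : Matrix I J α) : J × I → α := fun p => A p.2 p.1

/-- Index type for the lower triangle including the diagonal (positions of `vec_S`);
it has `m(m+1)/2` elements. -/
abbrev SymIdx (m : ℕ) := {p : Fin m × Fin m // p.2 ≤ p.1}

/-- Index type for the strictly lower triangle (positions of `vec_SK`);
it has `m(m-1)/2` elements. -/
abbrev SkewIdx (m : ℕ) := {p : Fin m × Fin m // p.2 < p.1}

/-- `vec_S` of a (symmetric) matrix: its lower-triangular entries `Z i j`, `j ≤ i`. -/
def vecS {m : ℕ} {α : Type*} (Z : Matrix (Fin m) (Fin m) α) : SymIdx m → α :=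
  fun p => Z p.1.1 p.1.2

/-- `vec_SK` of a (skew-symmetric) matrix: its strictly lower-triangular entries `Z i j`, `j < i`. -/
def vecSK {m : ℕ} {α : Type*} (Z : Matrix (Fin m) (Fin m) α) : SkewIdx m → α :=
  fun p => Z p.1.1 p.1.2

/-- `J_S^m`: its column at position `(i,j)`, `j ≤ i`, is `vec(eᵢeⱼᵀ + eⱼeᵢᵀ)` for `i > j` and
`vec(eⱼeⱼᵀ)` for `i = j`.  Rows are vec positions `(column, row)`. -/
def JS (m : ℕ) : Matrix (Fin m × Fin m) (SymIdx m) ℝ :=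
  Matrix.of fun cr p =>
    (if cr.2 = p.1.1 ∧ cr.1 = p.1.2 then (1 : ℝ) else 0) +
    (if p.1.1 ≠ p.1.2 ∧ cr.2 = p.1.2 ∧ cr.1 = p.1.1 then 1 else 0)

/-- `J_SK^m`: its column at position `(i,j)`, `j < i`, is `vec(eᵢeⱼᵀ − eⱼeᵢᵀ)`. -/
def JSK (m : ℕ) : Matrix (Fin m × Fin m) (SkewIdx m) ℝ :=
  Matrix.of fun cr p =>
    (if cr.2 = p.1.1 ∧ cr.1 = p.1.2 then (1 : ℝ) else 0) -
    (if cr.2 = p.1.2 ∧ cr.1 = p.1.1 then 1 else 0)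

open Classical in
/-- Sign pattern `Θ_X` of a matrix, with values in the same ring. -/
def theta {I J α : Type*} [Zero α] [One α] (X : Matrix I J α) : Matrix I J α :=
  Matrix.of fun i j => if X i j = 0 then 0 else 1

open Classical in
/-- Real-valued sign pattern `Θ_X` of a matrix. -/
def thetaR {I J α : Type*} [Zero α] (X : Matrix I J α) : Matrix I J ℝ :=
  Matrix.of fun i j => if X i j = 0 then 0 else 1

/-- `Φ_X = diag(vec_S(Θ_X))`. -/
def Phi {m : ℕ} {α : Type*} [Zero α] (X : Matrix (Fin m) (Fin m) α) :
    Matrix (SymIdx m) (SymIdx m) ℝ :=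
  Matrix.diagonal (vecS (thetaR X))

/-- `Ψ_X`: diagonal matrix listing the strictly lower-triangular entries of `Θ_X`
in `vec_SK` ordering. -/
def Psi {m : ℕ} {α : Type*} [Zero α] (X : Matrix (Fin m) (Fin m) α) :
    Matrix (SkewIdx m) (SkewIdx m) ℝ :=
  Matrix.diagonal (vecSK (thetaR X))

/-- `Σ_X = diag(vec(Θ_X))`. -/
def Sig {I J α : Type*} [DecidableEq I] [DecidableEq J] [Zero α]
    (X : Matrix I J α) : Matrix (J × I) (J × I) ℝ :=
  Matrix.diagonal (vecM (thetaR X))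

/-- `D_{S,m}`: diagonal entry `1` at the positions of diagonal entries `(j,j)`, `√2` elsewhere. -/
def DS (m : ℕ) : Matrix (SymIdx m) (SymIdx m) ℝ :=
  Matrix.diagonal fun p => if p.1.1 = p.1.2 then 1 else Real.sqrt 2

/-- `D_{SK,m} = √2·I`. -/
def DSK (m : ℕ) : Matrix (SkewIdx m) (SkewIdx m) ℝ :=
  Matrix.diagonal fun _ => Real.sqrt 2

/-- `uᵀ ⊗ I_b`, viewed as a matrix acting on column-major vectorizations of `b×a` matrices. -/
def rowKronId {a b : ℕ} (u : Fin a → ℝ) : Matrix (Fin b) (Fin a × Fin b) ℝ :=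
  Matrix.of fun r p => u p.1 * (if r = p.2 then 1 else 0)

/-- `I_a ⊗ vᵀ`, viewed as a matrix acting on column-major vectorizations of `b×a` matrices. -/
def idKronRow {a b : ℕ} (v : Fin b → ℝ) : Matrix (Fin a) (Fin a × Fin b) ℝ :=
  Matrix.of fun r p => (if r = p.1 then 1 else 0) * v p.2

/-- The weighted norm `ζ^{σ₁}(A,B,C,q,r)`. -/
def zeta1 {n m : ℕ} {α : Type*} [SeminormedAddGroup α]
    (α₁ α₂ α₃ β₁ β₂ : ℝ)
    (A : Matrix (Fin n) (Fin n) α) (B : Matrix (Fin m) (Fin n) α)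
    (C : Matrix (Fin m) (Fin m) α) (q : Fin n → α) (r : Fin m → α) : ℝ :=
  Real.sqrt (α₁ ^ 2 * frob A ^ 2 + α₂ ^ 2 * frob B ^ 2 + α₃ ^ 2 * frob C ^ 2 +
    β₁ ^ 2 * eunorm q ^ 2 + β₂ ^ 2 * eunorm r ^ 2)

/-- The weighted norm `ζ^{σ₂}(A,B,H,C,q,r)`. -/
def zeta2 {n m : ℕ} {α : Type*} [SeminormedAddGroup α]
    (α₁ α₂ α₃ α₄ β₁ β₂ : ℝ)
    (A : Matrix (Fin n) (Fin n) α) (B : Matrix (Fin m) (Fin n) α)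
    (H : Matrix (Fin m) (Fin n) α) (C : Matrix (Fin m) (Fin m) α)
    (q : Fin n → α) (r : Fin m → α) : ℝ :=
  Real.sqrt (α₁ ^ 2 * frob A ^ 2 + α₂ ^ 2 * frob B ^ 2 + α₃ ^ 2 * frob H ^ 2 +
    α₄ ^ 2 * frob C ^ 2 + β₁ ^ 2 * eunorm q ^ 2 + β₂ ^ 2 * eunorm r ^ 2)

theorem add_add_add_eq_add_iff_sub_eq {G : Type*} [AddCommGroup G] (a a' b b' c c' : G) :
    a + a' + (b + b') = c + c' ↔ a' + b' - c' = c - a - b := by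
  rw [← sub_eq_zero, ← sub_eq_zero (a := a' + b' - c')]
  constructor <;> intro h <;> rw [← h] <;> abel

theorem sum_subtype_eq_sum_ite {ι R : Type*} [Fintype ι] [AddCommMonoid R] (P : ι → Prop)
    [DecidablePred P] (g : ι → R) : ∑ p : {x // P x}, g p.1 = ∑ x, if P x then g x else 0 := by
  rw [← Finset.sum_filter]
  exact (Finset.sum_subtype _ (fun x => by simp) g).symm

theorem sum_subtype_ite_eq {ι R : Type*} [Fintype ι] [DecidableEq ι] [AddCommMonoid R]
    (P : ι → Prop) [DecidablePred P] (a : ι) (f : ι → R) :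
    ∑ p : {x // P x}, (if p.1 = a then f p.1 else 0) = if P a then f a else 0 := by
  rw [sum_subtype_eq_sum_ite P (fun x => if x = a then f x else 0)]
  exact (Fintype.sum_eq_single a fun x hx => by simp [hx]).trans (by simp)

theorem JS_mulVec_vecS {n : ℕ} {S : Matrix (Fin n) (Fin n) ℝ} (hS : S.IsSymm) :
    JS n *ᵥ vecS S = vecM S := by
  ext ⟨c, r⟩
  have h₁ : ∀ p : SymIdx n, (r = p.1.1 ∧ c = p.1.2) ↔ p.1 = (r, c) := fun p => by
    simp [Prod.ext_iff, eq_comm]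
  have h₂ : ∀ p : SymIdx n, (p.1.1 ≠ p.1.2 ∧ r = p.1.2 ∧ c = p.1.1) ↔ (p.1 = (c, r) ∧ c ≠ r) :=
    fun p => by simp only [Prod.ext_iff]; grind
  simp only [mulVec, dotProduct, JS, vecS, vecM, of_apply]
  simp only [h₁, h₂, add_mul, Finset.sum_add_distrib, ite_and, ite_mul, one_mul, zero_mul]
  rw [sum_subtype_ite_eq _ (r, c) (fun q => S q.1 q.2),
    sum_subtype_ite_eq _ (c, r) (fun q => if c ≠ r then S q.1 q.2 else 0)]
  dsimp only
  rcases lt_trichotomy c r with h | rfl | h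
  · simp [h.le, not_le.2 h]
  · simp
  · simp [h.le, not_le.2 h, h.ne', hS.apply]

theorem JSK_mulVec_vecSK {n : ℕ} {K : Matrix (Fin n) (Fin n) ℝ} (hK : Kᵀ = -K) :
    JSK n *ᵥ vecSK K = vecM K := by
  ext ⟨c, r⟩
  have h₁ : ∀ p : SkewIdx n, (r = p.1.1 ∧ c = p.1.2) ↔ p.1 = (r, c) := fun p => by
    simp [Prod.ext_iff, eq_comm]
  have h₂ : ∀ p : SkewIdx n, (r = p.1.2 ∧ c = p.1.1) ↔ p.1 = (c, r) := fun p => by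
    simp only [Prod.ext_iff]; grind
  have hK' : ∀ i j, K j i = -K i j := fun i j => by simpa using congrFun (congrFun hK i) j
  simp only [mulVec, dotProduct, JSK, vecSK, vecM, of_apply]
  simp only [h₁, h₂, sub_mul, Finset.sum_sub_distrib, ite_mul, one_mul, zero_mul]
  rw [sum_subtype_ite_eq _ (r, c) (fun q => K q.1 q.2),
    sum_subtype_ite_eq _ (c, r) (fun q => K q.1 q.2)]
  dsimp only
  rcases lt_trichotomy c r with h | rfl | h
  · simp [h, not_lt.2 h.le]
  · simp only [lt_irrefl, if_false, sub_zero]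
    linarith [hK' c c]
  · simp [h, not_lt.2 h.le, hK' c r]

theorem inv_diagonal_mulVec_diagonal_mulVec {ι K : Type*} [Fintype ι] [DecidableEq ι] [Field K]
    {d : ι → K} (hd : ∀ i, d i ≠ 0) (x : ι → K) : (diagonal d)⁻¹ *ᵥ (diagonal d *ᵥ x) = x := by
  have hdet : IsUnit (diagonal d).det := by
    rw [det_diagonal]
    exact (Finset.prod_ne_zero_iff.2 fun i _ => hd i).isUnit
  rw [mulVec_mulVec, nonsing_inv_mul _ hdet, one_mulVec]

theorem DS_inv_mulVec_DS_mulVec {n : ℕ} (x : SymIdx n → ℝ) : (DS n)⁻¹ *ᵥ (DS n *ᵥ x) = x :=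
  inv_diagonal_mulVec_diagonal_mulVec (fun _ => by split_ifs <;> positivity) x

theorem DSK_inv_mulVec_DSK_mulVec {n : ℕ} (x : SkewIdx n → ℝ) :
    (DSK n)⁻¹ *ᵥ (DSK n *ᵥ x) = x :=
  inv_diagonal_mulVec_diagonal_mulVec (fun _ => by positivity) x

def SupportedBy {I J α β : Type*} [Zero α] [Zero β] (A : Matrix I J α) (X : Matrix I J β) :
    Prop :=
  ∀ i j, X i j = 0 → A i j = 0

theorem supportedBy_hadamard_theta {I J α : Type*} [MulZeroOneClass α] (A X : Matrix I J α) :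
    SupportedBy (A.hadamard (theta X)) X := fun i j h => by
  simp [hadamard_apply, theta, h]

theorem SupportedBy.reM {I J β : Type*} [Zero β] {A : Matrix I J ℂ} {X : Matrix I J β}
    (h : SupportedBy A X) : SupportedBy (reM A) X := fun i j hX => by
  simp [GSPPBE.reM, h i j hX]

theorem SupportedBy.imM {I J β : Type*} [Zero β] {A : Matrix I J ℂ} {X : Matrix I J β}
    (h : SupportedBy A X) : SupportedBy (imM A) X := fun i j hX => by
  simp [GSPPBE.imM, h i j hX]

theorem SupportedBy.thetaR_mul {I J β : Type*} [Zero β] {A : Matrix I J ℝ} {X : Matrix I J β}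
    (h : SupportedBy A X) (i : I) (j : J) : thetaR X i j * A i j = A i j := by
  by_cases hX : X i j = 0 <;> simp [thetaR, hX, h i j]

theorem Phi_mulVec_vecS {n : ℕ} {β : Type*} [Zero β] {X : Matrix (Fin n) (Fin n) β}
    {A : Matrix (Fin n) (Fin n) ℝ} (h : SupportedBy A X) : Phi X *ᵥ vecS A = vecS A := by
  ext p
  rw [Phi, mulVec_diagonal]
  exact h.thetaR_mul _ _

theorem Psi_mulVec_vecSK {n : ℕ} {β : Type*} [Zero β] {X : Matrix (Fin n) (Fin n) β}
    {A : Matrix (Fin n) (Fin n) ℝ} (h : SupportedBy A X) : Psi X *ᵥ vecSK A = vecSK A := by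
  ext p
  rw [Psi, mulVec_diagonal]
  exact h.thetaR_mul _ _

theorem Sig_mulVec_vecM {I J β : Type*} [Fintype I] [Fintype J] [DecidableEq I] [DecidableEq J]
    [Zero β] {X : Matrix I J β} {A : Matrix I J ℝ} (h : SupportedBy A X) :
    Sig X *ᵥ vecM A = vecM A := by
  ext p
  rw [Sig, mulVec_diagonal]
  exact h.thetaR_mul _ _

theorem rowKronId_mulVec_vecM {a b : ℕ} (u : Fin a → ℝ) (A : Matrix (Fin b) (Fin a) ℝ) :
    rowKronId u *ᵥ vecM A = A *ᵥ u := by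
  ext r
  simp [rowKronId, mulVec, dotProduct, vecM, Fintype.sum_prod_type, mul_comm]

theorem idKronRow_mulVec_vecM {a b : ℕ} (v : Fin b → ℝ) (A : Matrix (Fin b) (Fin a) ℝ) :
    idKronRow v *ᵥ vecM A = Aᵀ *ᵥ v := by
  ext r
  simp [idKronRow, mulVec, dotProduct, vecM, Fintype.sum_prod_type, mul_comm]

theorem isHermitian_hadamard_theta {I : Type*} {A X : Matrix I I ℂ}
    (hA : A.IsHermitian) (hX : X.IsHermitian) : (A.hadamard (theta X)).IsHermitian := by
  ext i j
  have hXij : X j i = 0 ↔ X i j = 0 := by rw [← hX.apply i j, star_eq_zero]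
  by_cases h : X i j = 0 <;> simp [hadamard_apply, theta, h, hXij, ← hA.apply i j]

theorem reM_isSymm {I : Type*} {A : Matrix I I ℂ} (hA : A.IsHermitian) :
    (reM A).IsSymm := by
  ext i j
  simp [reM, ← hA.apply i j]

theorem transpose_imM {I : Type*} {A : Matrix I I ℂ} (hA : A.IsHermitian) :
    (imM A)ᵀ = -imM A := by
  ext i j
  simp [imM, ← hA.apply i j]

def realify {I : Type*} (v : I → ℂ) : I ⊕ I → ℝ := Sum.elim (reV v) (imV v)

theorem realify_injective {I : Type*} : Function.Injective (realify (I := I)) := fun _ _ h =>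
  funext fun i => Complex.ext (congrFun h (Sum.inl i)) (congrFun h (Sum.inr i))

theorem realify_add {I : Type*} (v w : I → ℂ) : realify (v + w) = realify v + realify w := by
  ext (i | i) <;> simp [realify, reV, imV]

theorem realify_neg {I : Type*} (v : I → ℂ) : realify (-v) = -realify v := by
  ext (i | i) <;> simp [realify, reV, imV]

theorem realify_mulVec {I J : Type*} [Fintype J] (A : Matrix I J ℂ) (u : J → ℂ) :
    realify (A *ᵥ u) =
      Sum.elim (reM A *ᵥ reV u - imM A *ᵥ imV u) (reM A *ᵥ imV u + imM A *ᵥ reV u) := by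
  ext (i | i) <;>
    simp [realify, reV, imV, reM, imM, mulVec, dotProduct, Complex.re_sum, Complex.im_sum,
      Finset.sum_sub_distrib, Finset.sum_add_distrib]

theorem realify_conjTranspose_mulVec {I J : Type*} [Fintype I] (A : Matrix I J ℂ) (v : I → ℂ) :
    realify (Aᴴ *ᵥ v) =
      Sum.elim ((reM A)ᵀ *ᵥ reV v + (imM A)ᵀ *ᵥ imV v) ((reM A)ᵀ *ᵥ imV v - (imM A)ᵀ *ᵥ reV v) := by
  ext (i | i) <;>
    simp [realify, reV, imV, reM, imM, mulVec, dotProduct, Complex.re_sum, Complex.im_sum,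
      Finset.sum_add_distrib, sub_eq_add_neg]

theorem inv_smul_mulVec_smul {I J : Type*} [Fintype J] {c : ℝ} (hc : c ≠ 0)
    (M : Matrix I J ℝ) (v : J → ℝ) : (c⁻¹ • M) *ᵥ (c • v) = M *ᵥ v := by
  rw [smul_mulVec, mulVec_smul, smul_smul, inv_mul_cancel₀ hc, one_smul]

theorem neg_inv_smul_mulVec_smul {I J : Type*} [Fintype J] {c : ℝ} (hc : c ≠ 0)
    (M : Matrix I J ℝ) (v : J → ℝ) : ((-c⁻¹) • M) *ᵥ (c • v) = -(M *ᵥ v) := by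
  rw [neg_smul, neg_mulVec, inv_smul_mulVec_smul hc]

theorem smul_sumElim_smul {α β : Type*} (c : ℝ) (f : α → ℝ) (g : β → ℝ) :
    Sum.elim (c • f) (c • g) = c • Sum.elim f g := by
  ext (i | i) <;> rfl

/- `rowKronId u * N` and `idKronRow v * N` elaborate with the heterogeneous multiplication of
`CStarMatrix`, so `Matrix.mulVec_mulVec` does not rewrite them syntactically. -/
theorem rowKronId_mul_mulVec {a b : ℕ} {κ : Type*} [Fintype κ] (u : Fin a → ℝ)
    (N : Matrix (Fin a × Fin b) κ ℝ) (v : κ → ℝ) :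
    (rowKronId u * N) *ᵥ v = rowKronId u *ᵥ (N *ᵥ v) :=
  (Matrix.mulVec_mulVec v _ N).symm

theorem idKronRow_mul_mulVec {a b : ℕ} {κ : Type*} [Fintype κ] (v : Fin b → ℝ)
    (N : Matrix (Fin a × Fin b) κ ℝ) (x : κ → ℝ) :
    (idKronRow v * N) *ᵥ x = idKronRow v *ᵥ (N *ᵥ x) :=
  (Matrix.mulVec_mulVec x _ N).symm

section Blocks

variable {β : Type*} [Zero β] {c : ℝ}

theorem JS_mul_Phi_mul_DS_inv_mulVec {n : ℕ} {X : Matrix (Fin n) (Fin n) β}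
    {S : Matrix (Fin n) (Fin n) ℝ} (hS : S.IsSymm) (hSX : SupportedBy S X) :
    (JS n * Phi X * (DS n)⁻¹) *ᵥ (DS n *ᵥ vecS S) = vecM S := by
  simp only [← Matrix.mulVec_mulVec, DS_inv_mulVec_DS_mulVec, Phi_mulVec_vecS hSX,
    JS_mulVec_vecS hS]

theorem JSK_mul_Psi_mul_DSK_inv_mulVec {n : ℕ} {X : Matrix (Fin n) (Fin n) β}
    {K : Matrix (Fin n) (Fin n) ℝ} (hK : Kᵀ = -K) (hKX : SupportedBy K X) :
    (JSK n * Psi X * (DSK n)⁻¹) *ᵥ (DSK n *ᵥ vecSK K) = vecM K := by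
  simp only [← Matrix.mulVec_mulVec, DSK_inv_mulVec_DSK_mulVec, Psi_mulVec_vecSK hKX,
    JSK_mulVec_vecSK hK]

theorem hermitianBlock_mulVec {n : ℕ} {X : Matrix (Fin n) (Fin n) β}
    {Δ : Matrix (Fin n) (Fin n) ℂ} (hΔ : Δ.IsHermitian) (hΔX : SupportedBy Δ X) (hc : c ≠ 0)
    (u : Fin n → ℂ) :
    fromRows
        (fromCols (c⁻¹ • (rowKronId (reV u) * (JS n * Phi X * (DS n)⁻¹)))
          ((-c⁻¹) • (rowKronId (imV u) * (JSK n * Psi X * (DSK n)⁻¹))))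
        (fromCols (c⁻¹ • (rowKronId (imV u) * (JS n * Phi X * (DS n)⁻¹)))
          (c⁻¹ • (rowKronId (reV u) * (JSK n * Psi X * (DSK n)⁻¹)))) *ᵥ
      Sum.elim (c • (DS n *ᵥ vecS (reM Δ))) (c • (DSK n *ᵥ vecSK (imM Δ))) =
    realify (Δ *ᵥ u) := by
  simp only [realify_mulVec, fromRows_mulVec, fromCols_mulVec_sumElim, inv_smul_mulVec_smul hc,
    neg_inv_smul_mulVec_smul hc, rowKronId_mul_mulVec,
    JS_mul_Phi_mul_DS_inv_mulVec (reM_isSymm hΔ) hΔX.reM,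
    JSK_mul_Psi_mul_DSK_inv_mulVec (transpose_imM hΔ) hΔX.imM, rowKronId_mulVec_vecM,
    sub_eq_add_neg]

variable {a b : ℕ} {X : Matrix (Fin b) (Fin a) β} {Δ : Matrix (Fin b) (Fin a) ℂ}

theorem matrixBlock_mulVec (hΔX : SupportedBy Δ X) (hc : c ≠ 0) (u : Fin a → ℂ) :
    fromRows
        (fromCols (c⁻¹ • (rowKronId (reV u) * Sig X)) ((-c⁻¹) • (rowKronId (imV u) * Sig X)))
        (fromCols (c⁻¹ • (rowKronId (imV u) * Sig X)) (c⁻¹ • (rowKronId (reV u) * Sig X))) *ᵥ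
      Sum.elim (c • vecM (reM Δ)) (c • vecM (imM Δ)) =
    realify (Δ *ᵥ u) := by
  simp only [realify_mulVec, fromRows_mulVec, fromCols_mulVec_sumElim, inv_smul_mulVec_smul hc,
    neg_inv_smul_mulVec_smul hc, rowKronId_mul_mulVec, Sig_mulVec_vecM hΔX.reM,
    Sig_mulVec_vecM hΔX.imM, rowKronId_mulVec_vecM, sub_eq_add_neg]

theorem conjTransposeBlock_mulVec (hΔX : SupportedBy Δ X) (hc : c ≠ 0) (v : Fin b → ℂ) :
    fromRows
        (fromCols (c⁻¹ • (idKronRow (reV v) * Sig X)) (c⁻¹ • (idKronRow (imV v) * Sig X)))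
        (fromCols (c⁻¹ • (idKronRow (imV v) * Sig X)) ((-c⁻¹) • (idKronRow (reV v) * Sig X))) *ᵥ
      Sum.elim (c • vecM (reM Δ)) (c • vecM (imM Δ)) =
    realify (Δᴴ *ᵥ v) := by
  simp only [realify_conjTranspose_mulVec, fromRows_mulVec, fromCols_mulVec_sumElim,
    inv_smul_mulVec_smul hc, neg_inv_smul_mulVec_smul hc, idKronRow_mul_mulVec,
    Sig_mulVec_vecM hΔX.reM, Sig_mulVec_vecM hΔX.imM, idKronRow_mulVec_vecM, sub_eq_add_neg]

end Blocks

theorem neg_inv_smul_one_mulVec {I : Type*} [Fintype I] [DecidableEq I] {c : ℝ} (hc : c ≠ 0)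
    (v : I → ℂ) :
    ((-c⁻¹) • (1 : Matrix (I ⊕ I) (I ⊕ I) ℝ)) *ᵥ Sum.elim (c • reV v) (c • imV v) =
      -realify v := by
  rw [smul_sumElim_smul, neg_inv_smul_mulVec_smul hc, one_mulVec, realify]

theorem eunorm_nonneg {I α : Type*} [Fintype I] [SeminormedAddGroup α] (v : I → α) :
    0 ≤ eunorm v :=
  Real.sqrt_nonneg _

theorem eunorm_sq {I α : Type*} [Fintype I] [SeminormedAddGroup α] (v : I → α) :
    eunorm v ^ 2 = ∑ i, ‖v i‖ ^ 2 :=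
  Real.sq_sqrt (by positivity)

theorem eunorm_sumElim_sq {I J α : Type*} [Fintype I] [Fintype J] [SeminormedAddGroup α]
    (v : I → α) (w : J → α) : eunorm (Sum.elim v w) ^ 2 = eunorm v ^ 2 + eunorm w ^ 2 := by
  simp only [eunorm_sq, Fintype.sum_sum_type, Sum.elim_inl, Sum.elim_inr]

theorem eunorm_smul_sq {I : Type*} [Fintype I] (c : ℝ) (v : I → ℝ) :
    eunorm (c • v) ^ 2 = c ^ 2 * eunorm v ^ 2 := by
  simp only [eunorm_sq, Pi.smul_apply, smul_eq_mul, norm_mul, mul_pow, Real.norm_eq_abs, sq_abs,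
    Finset.mul_sum]

theorem eunorm_sq_eq_reV_add_imV {I : Type*} [Fintype I] (v : I → ℂ) :
    eunorm v ^ 2 = eunorm (reV v) ^ 2 + eunorm (imV v) ^ 2 := by
  rw [eunorm_sq, eunorm_sq, eunorm_sq, ← Finset.sum_add_distrib]
  refine Finset.sum_congr rfl fun i _ => ?_
  rw [Complex.sq_norm, Complex.normSq_apply]
  simp [reV, imV, sq]

theorem frob_eq_eunorm_vecM {I J α : Type*} [Fintype I] [Fintype J] [SeminormedAddGroup α]
    (A : Matrix I J α) : frob A = eunorm (vecM A) := by
  rw [frob, eunorm, Fintype.sum_prod_type, Finset.sum_comm]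
  rfl

theorem frob_sq_eq_reM_add_imM {I J : Type*} [Fintype I] [Fintype J] (A : Matrix I J ℂ) :
    frob A ^ 2 = eunorm (vecM (reM A)) ^ 2 + eunorm (vecM (imM A)) ^ 2 := by
  rw [frob_eq_eunorm_vecM, eunorm_sq_eq_reV_add_imV]
  rfl

theorem sum_eq_sum_of_weight_add_swap {ι : Type*} [Fintype ι] {c f : ι × ι → ℝ}
    (hf : ∀ q, f q.swap = f q) (hc : ∀ q, (c q + c q.swap) * f q = 2 * f q) :
    ∑ q, c q * f q = ∑ q, f q := by
  have hswap : ∑ q, c q.swap * f q = ∑ q, c q * f q := by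
    rw [← (Equiv.prodComm _ _).sum_comp]
    simp [hf]
  have hsum : ∑ q, c q * f q + ∑ q, c q.swap * f q = 2 * ∑ q, f q := by
    rw [← Finset.sum_add_distrib, Finset.mul_sum]
    exact Finset.sum_congr rfl fun q _ => by rw [← hc q]; ring
  linarith

theorem frob_sq_eq_sum_sq {I J : Type*} [Fintype I] [Fintype J] (A : Matrix I J ℝ) :
    frob A ^ 2 = ∑ q : I × J, A q.1 q.2 ^ 2 := by
  rw [frob, Real.sq_sqrt (by positivity), Fintype.sum_prod_type]
  simp [Real.norm_eq_abs, sq_abs]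

theorem eunorm_DS_mulVec_vecS_sq {n : ℕ} {S : Matrix (Fin n) (Fin n) ℝ} (hS : S.IsSymm) :
    eunorm (DS n *ᵥ vecS S) ^ 2 = frob S ^ 2 := by
  calc eunorm (DS n *ᵥ vecS S) ^ 2
      = ∑ p : SymIdx n, (if p.1.1 = p.1.2 then 1 else 2) * S p.1.1 p.1.2 ^ 2 := by
        rw [eunorm_sq]
        refine Finset.sum_congr rfl fun p _ => ?_
        simp only [DS, mulVec_diagonal, vecS, Real.norm_eq_abs, sq_abs, mul_pow]
        split_ifs <;> simp
    _ = ∑ q : Fin n × Fin n,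
          (if q.2 ≤ q.1 then (if q.1 = q.2 then 1 else 2) else 0) * S q.1 q.2 ^ 2 := by
        rw [sum_subtype_eq_sum_ite (fun q : Fin n × Fin n => q.2 ≤ q.1)
          (fun q => (if q.1 = q.2 then 1 else 2) * S q.1 q.2 ^ 2)]
        simp only [ite_mul, zero_mul]
    _ = frob S ^ 2 := by
        rw [frob_sq_eq_sum_sq]
        refine sum_eq_sum_of_weight_add_swap (fun q => by simp [hS.apply]) fun ⟨i, j⟩ => ?_
        rcases lt_trichotomy i j with h | rfl | h
        · simp [h.ne', not_le.2 h, h.le]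
        · norm_num
        · simp [h.ne', not_le.2 h, h.le]

theorem eunorm_DSK_mulVec_vecSK_sq {n : ℕ} {K : Matrix (Fin n) (Fin n) ℝ} (hK : Kᵀ = -K) :
    eunorm (DSK n *ᵥ vecSK K) ^ 2 = frob K ^ 2 := by
  have hK' : ∀ i j, K j i = -K i j := fun i j => by simpa using congrFun (congrFun hK i) j
  calc eunorm (DSK n *ᵥ vecSK K) ^ 2 = ∑ p : SkewIdx n, 2 * K p.1.1 p.1.2 ^ 2 := by
        rw [eunorm_sq]
        refine Finset.sum_congr rfl fun p _ => ?_
        simp [DSK, mulVec_diagonal, vecSK, mul_pow]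
    _ = ∑ q : Fin n × Fin n, (if q.2 < q.1 then 2 else 0) * K q.1 q.2 ^ 2 := by
        rw [sum_subtype_eq_sum_ite (fun q : Fin n × Fin n => q.2 < q.1)
          (fun q => 2 * K q.1 q.2 ^ 2)]
        simp only [ite_mul, zero_mul]
    _ = frob K ^ 2 := by
        rw [frob_sq_eq_sum_sq]
        refine sum_eq_sum_of_weight_add_swap (fun ⟨i, j⟩ => by simp [hK' i j]) fun ⟨i, j⟩ => ?_
        rcases lt_trichotomy i j with h | rfl | h
        · simp [h, not_lt.2 h.le]
        · simp [show K i i = 0 by linarith [hK' i i]]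
        · simp [h, not_lt.2 h.le]

theorem frob_sq_eq_of_isHermitian {n : ℕ} {A : Matrix (Fin n) (Fin n) ℂ}
    (hA : A.IsHermitian) :
    frob A ^ 2 = eunorm (DS n *ᵥ vecS (reM A)) ^ 2 + eunorm (DSK n *ᵥ vecSK (imM A)) ^ 2 := by
  rw [eunorm_DS_mulVec_vecS_sq (reM_isSymm hA), eunorm_DSK_mulVec_vecSK_sq (transpose_imM hA),
    frob_sq_eq_reM_add_imM, frob_eq_eunorm_vecM, frob_eq_eunorm_vecM]

theorem zeta1_eq_eunorm {n m : ℕ} {A : Matrix (Fin n) (Fin n) ℂ} (hA : A.IsHermitian)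
    (B : Matrix (Fin m) (Fin n) ℂ) (C : Matrix (Fin m) (Fin m) ℂ) (q : Fin n → ℂ)
    (r : Fin m → ℂ) (α₁ α₂ α₃ β₁ β₂ : ℝ) :
    zeta1 α₁ α₂ α₃ β₁ β₂ A B C q r =
      eunorm (Sum.elim
        (Sum.elim
          (Sum.elim (α₁ • (DS n *ᵥ vecS (reM A))) (α₁ • (DSK n *ᵥ vecSK (imM A))))
          (Sum.elim
            (Sum.elim (α₂ • vecM (reM B)) (α₂ • vecM (imM B)))
            (Sum.elim (α₃ • vecM (reM C)) (α₃ • vecM (imM C)))))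
        (Sum.elim
          (Sum.elim (β₁ • reV q) (β₁ • imV q))
          (Sum.elim (β₂ • reV r) (β₂ • imV r)))) := by
  rw [zeta1]
  conv_rhs => rw [← Real.sqrt_sq (eunorm_nonneg _)]
  simp only [eunorm_sumElim_sq, eunorm_smul_sq]
  rw [frob_sq_eq_of_isHermitian hA, frob_sq_eq_reM_add_imM B, frob_sq_eq_reM_add_imM C,
    eunorm_sq_eq_reV_add_imV q, eunorm_sq_eq_reV_add_imV r]
  congr 1
  ring

/-- for case (i), the weighted norm of the perturbation equals the Euclidean
norm of `[ΔY; ΔZ]`, and the perturbed GSPP equations are equivalent to the real linear system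
`[[X₁, I₁],[X₂, I₂]]·[ΔY; ΔZ] = [ℜQ; ℑQ; ℜR; ℑR]`. -/
theorem structured_BE_case_i_reformulation
    (n m : ℕ) (E : Matrix (Fin n) (Fin n) ℂ) (hE : E.IsHermitian)
    (F : Matrix (Fin m) (Fin n) ℂ) (G : Matrix (Fin m) (Fin m) ℂ)
    (q : Fin n → ℂ) (r : Fin m → ℂ) (uh : Fin n → ℂ) (ph : Fin m → ℂ)
    (α₁ α₂ α₃ β₁ β₂ : ℝ)
    (hα₁ : 0 < α₁) (hα₂ : 0 < α₂) (hα₃ : 0 < α₃) (hβ₁ : 0 < β₁) (hβ₂ : 0 < β₂)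
    (ΔE : Matrix (Fin n) (Fin n) ℂ) (hΔE : ΔE.IsHermitian)
    (ΔF : Matrix (Fin m) (Fin n) ℂ) (ΔG : Matrix (Fin m) (Fin m) ℂ)
    (Δq : Fin n → ℂ) (Δr : Fin m → ℂ) :
    let Q : Fin n → ℂ := q - E *ᵥ uh - Fᴴ *ᵥ ph
    let R : Fin m → ℂ := r - F *ᵥ uh - G *ᵥ ph
    let N₁ := JS n * Phi E * (DS n)⁻¹
    let N₂ := JSK n * Psi E * (DSK n)⁻¹
    let X₁ : Matrix (Fin n ⊕ Fin n)
        ((SymIdx n ⊕ SkewIdx n) ⊕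
          (((Fin n × Fin m) ⊕ (Fin n × Fin m)) ⊕ ((Fin m × Fin m) ⊕ (Fin m × Fin m)))) ℝ :=
      fromCols
        (fromRows
          (fromCols (α₁⁻¹ • (rowKronId (reV uh) * N₁))
            ((-(α₁⁻¹)) • (rowKronId (imV uh) * N₂)))
          (fromCols (α₁⁻¹ • (rowKronId (imV uh) * N₁))
            (α₁⁻¹ • (rowKronId (reV uh) * N₂))))
        (fromCols
          (fromRows
            (fromCols (α₂⁻¹ • (idKronRow (reV ph) * Sig F))
              (α₂⁻¹ • (idKronRow (imV ph) * Sig F)))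
            (fromCols (α₂⁻¹ • (idKronRow (imV ph) * Sig F))
              ((-(α₂⁻¹)) • (idKronRow (reV ph) * Sig F))))
          0)
    let X₂ : Matrix (Fin m ⊕ Fin m)
        ((SymIdx n ⊕ SkewIdx n) ⊕
          (((Fin n × Fin m) ⊕ (Fin n × Fin m)) ⊕ ((Fin m × Fin m) ⊕ (Fin m × Fin m)))) ℝ :=
      fromCols 0
        (fromCols
          (fromRows
            (fromCols (α₂⁻¹ • (rowKronId (reV uh) * Sig F))
              ((-(α₂⁻¹)) • (rowKronId (imV uh) * Sig F)))
            (fromCols (α₂⁻¹ • (rowKronId (imV uh) * Sig F))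
              (α₂⁻¹ • (rowKronId (reV uh) * Sig F))))
          (fromRows
            (fromCols (α₃⁻¹ • (rowKronId (reV ph) * Sig G))
              ((-(α₃⁻¹)) • (rowKronId (imV ph) * Sig G)))
            (fromCols (α₃⁻¹ • (rowKronId (imV ph) * Sig G))
              (α₃⁻¹ • (rowKronId (reV ph) * Sig G)))))
    let I₁ : Matrix (Fin n ⊕ Fin n) ((Fin n ⊕ Fin n) ⊕ (Fin m ⊕ Fin m)) ℝ :=
      fromCols ((-(β₁⁻¹)) • (1 : Matrix (Fin n ⊕ Fin n) (Fin n ⊕ Fin n) ℝ)) 0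
    let I₂ : Matrix (Fin m ⊕ Fin m) ((Fin n ⊕ Fin n) ⊕ (Fin m ⊕ Fin m)) ℝ :=
      fromCols 0 ((-(β₂⁻¹)) • (1 : Matrix (Fin m ⊕ Fin m) (Fin m ⊕ Fin m) ℝ))
    let M := fromBlocks X₁ I₁ X₂ I₂
    let w : (Fin n ⊕ Fin n) ⊕ (Fin m ⊕ Fin m) → ℝ :=
      Sum.elim (Sum.elim (reV Q) (imV Q)) (Sum.elim (reV R) (imV R))
    let ΔY : (SymIdx n ⊕ SkewIdx n) ⊕
        (((Fin n × Fin m) ⊕ (Fin n × Fin m)) ⊕ ((Fin m × Fin m) ⊕ (Fin m × Fin m))) → ℝ :=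
      Sum.elim
        (Sum.elim (α₁ • (DS n *ᵥ vecS (reM (ΔE.hadamard (theta E)))))
          (α₁ • (DSK n *ᵥ vecSK (imM (ΔE.hadamard (theta E))))))
        (Sum.elim
          (Sum.elim (α₂ • vecM (reM (ΔF.hadamard (theta F))))
            (α₂ • vecM (imM (ΔF.hadamard (theta F)))))
          (Sum.elim (α₃ • vecM (reM (ΔG.hadamard (theta G))))
            (α₃ • vecM (imM (ΔG.hadamard (theta G))))))
    let ΔZ : (Fin n ⊕ Fin n) ⊕ (Fin m ⊕ Fin m) → ℝ :=
      Sum.elim (Sum.elim (β₁ • reV Δq) (β₁ • imV Δq)) (Sum.elim (β₂ • reV Δr) (β₂ • imV Δr))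
    (zeta1 α₁ α₂ α₃ β₁ β₂ (ΔE.hadamard (theta E)) (ΔF.hadamard (theta F))
        (ΔG.hadamard (theta G)) Δq Δr = eunorm (Sum.elim ΔY ΔZ)) ∧
    (((E + ΔE.hadamard (theta E)) *ᵥ uh + (F + ΔF.hadamard (theta F))ᴴ *ᵥ ph = q + Δq ∧
      (F + ΔF.hadamard (theta F)) *ᵥ uh + (G + ΔG.hadamard (theta G)) *ᵥ ph = r + Δr) ↔
      M *ᵥ Sum.elim ΔY ΔZ = w) := by
  have hA := isHermitian_hadamard_theta hΔE hE
  have hAE := supportedBy_hadamard_theta ΔE E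
  have hBF := supportedBy_hadamard_theta ΔF F
  have hCG := supportedBy_hadamard_theta ΔG G
  generalize ΔE.hadamard (theta E) = A at hA hAE ⊢
  generalize ΔF.hadamard (theta F) = B at hBF ⊢
  generalize ΔG.hadamard (theta G) = C at hCG ⊢
  intro Q R N₁ N₂ X₁ X₂ I₁ I₂ M w ΔY ΔZ
  refine ⟨zeta1_eq_eunorm hA B C Δq Δr α₁ α₂ α₃ β₁ β₂, ?_⟩
  have hM : M *ᵥ Sum.elim ΔY ΔZ =
      Sum.elim (realify (A *ᵥ uh + Bᴴ *ᵥ ph - Δq)) (realify (B *ᵥ uh + C *ᵥ ph - Δr)) := by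
    simp only [M, X₁, X₂, I₁, I₂, ΔY, ΔZ, N₁, N₂, fromBlocks_mulVec, Sum.elim_comp_inl,
      Sum.elim_comp_inr, fromCols_mulVec_sumElim, zero_mulVec, add_zero, zero_add,
      hermitianBlock_mulVec hA hAE hα₁.ne', conjTransposeBlock_mulVec hBF hα₂.ne',
      matrixBlock_mulVec hBF hα₂.ne', matrixBlock_mulVec hCG hα₃.ne',
      neg_inv_smul_one_mulVec hβ₁.ne', neg_inv_smul_one_mulVec hβ₂.ne', realify_add, realify_neg,
      sub_eq_add_neg]
  have hw : w = Sum.elim (realify Q) (realify R) := rfl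
  rw [hM, hw, Sum.elim_eq_iff, realify_injective.eq_iff, realify_injective.eq_iff,
    conjTranspose_add, add_mulVec, add_mulVec, add_mulVec, add_mulVec,
    add_add_add_eq_add_iff_sub_eq, add_add_add_eq_add_iff_sub_eq]

end GSPPBE
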